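/- Let G be a graph with |V| = 3δ for some integer δ ≥ 1. Then G has a (|V|/3)-Partitionable fractional perfect matching if and only if V can be partitioned into δ disjoint vertex sets V_1, …, V_δ, each containing exactly three vertices, such that for each j ∈ [δ] the three vertices of V_j induce a triangle in G. -/

import Mathlib

open Finset
open scoped Classical

variable {V : Type*} [Fintype V] [DecidableEq V]

/-- The sum of `f` over the edges (elements of `Sym2 V`) containing the vertex `v`. -/
noncomputable def fracDeg (f : Sym2 V → ℝ) (v : V) : ℝ :=
  ∑ e ∈ Finset.univ.filter (fun e : Sym2 V => v ∈ e), f e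

/-- `f` is a fractional matching of `G`. -/
def IsFracMatching (G : SimpleGraph V) (f : Sym2 V → ℝ) : Prop :=
  (∀ e, 0 ≤ f e ∧ f e ≤ 1) ∧ (∀ e, e ∉ G.edgeSet → f e = 0) ∧ ∀ v, fracDeg f v ≤ 1

/-- `f` is a fractional perfect matching of `G`. -/
def IsFPM (G : SimpleGraph V) (f : Sym2 V → ℝ) : Prop :=
  (∀ e, 0 ≤ f e ∧ f e ≤ 1) ∧ (∀ e, e ∉ G.edgeSet → f e = 0) ∧ ∀ v, fracDeg f v = 1

/-- `E(f)`: the set of edges with positive weight. -/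
noncomputable def fSupp (f : Sym2 V → ℝ) : Finset (Sym2 V) :=
  Finset.univ.filter (fun e => 0 < f e)

/-- Number of edges of `F` containing `v` (the degree of `v` in the subgraph with edge set `F`). -/
noncomputable def edgeDeg (F : Finset (Sym2 V)) (v : V) : ℕ :=
  (F.filter (fun e => v ∈ e)).card

/-- The set of vertices incident to some edge of `F`. -/
noncomputable def vertSet (F : Finset (Sym2 V)) : Finset V :=
  Finset.univ.filter (fun v => ∃ e ∈ F, v ∈ e)

/-- Two edge-weight functions are equivalent: same incident sums at every vertex. -/
def Equiv' (f f' : Sym2 V → ℝ) : Prop := ∀ v : V, fracDeg f v = fracDeg f' v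

/-- `F` consists of a single edge. -/
def IsSingleEdge (F : Finset (Sym2 V)) : Prop := ∃ e : Sym2 V, F = {e}

/-- `F` is the edge set of an odd cycle. -/
def IsOddCycleSet (F : Finset (Sym2 V)) : Prop :=
  ∃ (v : V) (c : (SimpleGraph.fromEdgeSet (↑F : Set (Sym2 V))).Walk v v),
    c.IsCycle ∧ Odd c.length ∧ c.edges.toFinset = F

/-- Two edge sets are vertex-disjoint. -/
def VDisj (F F' : Finset (Sym2 V)) : Prop :=
  ∀ v : V, (∃ e ∈ F, v ∈ e) → ¬ ∃ e ∈ F', v ∈ e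

/-- Every connected component of the subgraph with edge set `F` (ignoring isolated
vertices) is either a single edge or an odd cycle, expressed via a partition of `F`
into pairwise vertex-disjoint such pieces. -/
def EdgesAndOddCycles (F : Finset (Sym2 V)) : Prop :=
  ∃ P : Finset (Finset (Sym2 V)),
    (∀ A ∈ P, IsSingleEdge A ∨ IsOddCycleSet A) ∧
    (∀ A ∈ P, ∀ B ∈ P, A ≠ B → VDisj A B) ∧
    P.biUnion id = F

/-- The family `P` witnesses that `f` is a `δ`-Partitionable fractional perfect matching. -/
def IsPartitionWitness (f : Sym2 V → ℝ) (δ : ℕ) (P : Fin δ → Finset (Sym2 V)) : Prop :=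
  (∀ j, (P j).Nonempty) ∧
  (∀ j k, j ≠ k → VDisj (P j) (P k)) ∧
  (∀ j, P j ⊆ fSupp f) ∧
  (∀ e ∈ fSupp f, ∃ j, e ∈ P j) ∧
  ∀ j, ∑ e ∈ P j, f e = (Fintype.card V : ℝ) / (2 * δ)

/-- `f` is `δ`-Partitionable. -/
def IsDeltaPartitionable (f : Sym2 V → ℝ) (δ : ℕ) : Prop :=
  ∃ P : Fin δ → Finset (Sym2 V), IsPartitionWitness f δ P

/-! If `E(f)` splits into `δ` vertex-disjoint parts of weight `|V|/(2δ) = 3/2`, each part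
carries all the weight at its own vertices, so double counting gives each part exactly
`2 · 3/2 = 3` vertices. At each vertex of such a triple the two weights sum to `1`, which
forces weight `1/2` on all three edges; in particular they are edges of `G`. Conversely,
weight `1/2` on the edges of the given triangles is a fractional perfect matching whose
support is partitioned by the triangles. -/

def SupportClosed {α : Type*} (f : Sym2 α → ℝ) (U : Finset α) : Prop :=
  ∀ e, f e ≠ 0 → ∀ u ∈ e, u ∈ U → ∀ v ∈ e, v ∈ U

lemma Finset.exists_eq_triple_of_mem {α : Type*} [DecidableEq α] {U : Finset α}
    (hU : U.card = 3) {p q : α} (hp : p ∈ U) (hq : q ∈ U) (hpq : p ≠ q) :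
    ∃ r, r ≠ p ∧ r ≠ q ∧ U = {p, q, r} := by
  have hpqU : {p, q} ⊆ U := insert_subset hp (singleton_subset_iff.mpr hq)
  obtain ⟨r, hr⟩ := card_eq_one.mp (by rw [card_sdiff_of_subset hpqU, card_pair hpq, hU] :
    (U \ {p, q}).card = 1)
  have hrU : r ∈ U \ {p, q} := hr ▸ mem_singleton_self r
  simp only [mem_sdiff, mem_insert, mem_singleton, not_or] at hrU
  obtain ⟨hrU, hrp, hrq⟩ := hrU
  refine ⟨r, hrp, hrq, (eq_of_subset_of_card_le ?_ ?_).symm⟩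
  · exact insert_subset hp (insert_subset hq (singleton_subset_iff.mpr hrU))
  · rw [hU, card_eq_three.mpr ⟨p, q, r, hpq, Ne.symm hrp, Ne.symm hrq, rfl⟩]

lemma mem_fSupp {α : Type*} [Fintype α] {f : Sym2 α → ℝ} {e : Sym2 α} :
    e ∈ fSupp f ↔ 0 < f e := by
  simp [fSupp]

lemma mem_vertSet {F : Finset (Sym2 V)} {v : V} : v ∈ vertSet F ↔ ∃ e ∈ F, v ∈ e := by
  simp [vertSet]

lemma mem_vertSet_of_mem {F : Finset (Sym2 V)} {e : Sym2 V} (he : e ∈ F) {v : V} (hv : v ∈ e) :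
    v ∈ vertSet F :=
  mem_vertSet.mpr ⟨e, he, hv⟩

section FracDeg

variable {f : Sym2 V → ℝ}

lemma fracDeg_eq_sum_of_support {F : Finset (Sym2 V)} {v : V}
    (hF : ∀ e, f e ≠ 0 → v ∈ e → e ∈ F) :
    fracDeg f v = ∑ e ∈ F, if v ∈ e then f e else 0 := by
  rw [fracDeg, sum_filter]
  refine (sum_subset (subset_univ F) fun e _ he => ?_).symm
  split_ifs with hv
  · by_contra h
    exact he (hF e h hv)
  · rfl

lemma sum_fracDeg_eq_two_mul_sum {F : Finset (Sym2 V)} {U : Finset V}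
    (hFU : ∀ e ∈ F, ∀ v ∈ e, v ∈ U) (hdiag : ∀ e ∈ F, ¬ e.IsDiag)
    (hUF : ∀ e, f e ≠ 0 → ∀ v ∈ e, v ∈ U → e ∈ F) :
    ∑ v ∈ U, fracDeg f v = 2 * ∑ e ∈ F, f e := by
  calc ∑ v ∈ U, fracDeg f v = ∑ v ∈ U, ∑ e ∈ F, if v ∈ e.toFinset then f e else 0 :=
        sum_congr rfl fun v hv => by
          simp only [Sym2.mem_toFinset]
          exact fracDeg_eq_sum_of_support fun e he hve => hUF e he v hve hv
    _ = ∑ e ∈ F, ∑ v ∈ U ∩ e.toFinset, f e := by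
        rw [sum_comm]
        simp only [sum_ite_mem]
    _ = ∑ e ∈ F, 2 * f e := sum_congr rfl fun e he => by
        rw [inter_eq_right.mpr fun v hv => hFU e he v (Sym2.mem_toFinset.mp hv), sum_const,
          Sym2.card_toFinset_of_not_isDiag e (hdiag e he), nsmul_eq_mul, Nat.cast_ofNat]
    _ = 2 * ∑ e ∈ F, f e := (mul_sum ..).symm

lemma fracDeg_eq_add_of_supportClosed {x y z : V} (hloop : ∀ e, f e ≠ 0 → ¬ e.IsDiag)
    (hU : SupportClosed f {x, y, z}) (hyz : y ≠ z) :
    fracDeg f x = f s(x, y) + f s(x, z) := by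
  have hpair : s(x, y) ≠ s(x, z) := fun h => hyz (Sym2.congr_right.mp h)
  rw [fracDeg_eq_sum_of_support (F := {s(x, y), s(x, z)}), sum_pair hpair]
  · simp
  · intro e he hxe
    obtain ⟨t, rfl⟩ := Sym2.mem_iff_exists.mp hxe
    have htx : x ≠ t := fun h => hloop _ he (Sym2.mk_isDiag_iff.mpr h)
    have ht := hU _ he x hxe (mem_insert_self _ _) t (Sym2.mem_mk_right x t)
    simp only [mem_insert, mem_singleton] at ht ⊢
    rcases ht with rfl | rfl | rfl
    · exact absurd rfl htx
    · exact Or.inl rfl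
    · exact Or.inr rfl

end FracDeg

section FractionalPerfectMatching

variable {G : SimpleGraph V} {f : Sym2 V → ℝ}

lemma IsFPM.mem_edgeSet_of_ne_zero (hf : IsFPM G f) {e : Sym2 V} (he : f e ≠ 0) :
    e ∈ G.edgeSet := by
  by_contra h
  exact he (hf.2.1 e h)

lemma IsFPM.not_isDiag_of_ne_zero (hf : IsFPM G f) {e : Sym2 V} (he : f e ≠ 0) : ¬ e.IsDiag :=
  G.not_isDiag_of_mem_edgeSet (hf.mem_edgeSet_of_ne_zero he)

lemma IsFPM.pos_of_ne_zero (hf : IsFPM G f) {e : Sym2 V} (he : f e ≠ 0) : 0 < f e :=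
  (hf.1 e).1.lt_of_ne' he

lemma IsFPM.adj_of_supportClosed (hf : IsFPM G f) {U : Finset V} (hU : SupportClosed f U)
    (hcard : U.card = 3) {p q : V} (hp : p ∈ U) (hq : q ∈ U) (hpq : p ≠ q) : G.Adj p q := by
  obtain ⟨r, hrp, hrq, rfl⟩ := exists_eq_triple_of_mem hcard hp hq hpq
  have hloop := fun e => hf.not_isDiag_of_ne_zero (e := e)
  have hp' := fracDeg_eq_add_of_supportClosed hloop hU hrq.symm
  have hq' := fracDeg_eq_add_of_supportClosed (x := q) hloop (by rwa [insert_comm]) hrp.symm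
  have hrpq : ({r, p, q} : Finset V) = {p, q, r} := by
    ext
    simp only [mem_insert, mem_singleton]
    tauto
  have hr' := fracDeg_eq_add_of_supportClosed (x := r) hloop (by rwa [hrpq]) hpq
  rw [hf.2.2, Sym2.eq_swap (a := q)] at hq'
  rw [hf.2.2, Sym2.eq_swap (a := r), Sym2.eq_swap (a := r)] at hr'
  rw [hf.2.2] at hp'
  -- the equations at `p` and `q` minus the one at `r`
  have hpq_half : f s(p, q) = 1 / 2 := by linarith
  exact hf.mem_edgeSet_of_ne_zero (by rw [hpq_half]; norm_num)

variable {δ : ℕ} {P : Fin δ → Finset (Sym2 V)}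

lemma IsPartitionWitness.mem_of_mem_vertSet (hP : IsPartitionWitness f δ P) {j : Fin δ}
    {e : Sym2 V} {u : V} (he : 0 < f e) (hue : u ∈ e) (hu : u ∈ vertSet (P j)) : e ∈ P j := by
  obtain ⟨-, hvdisj, -, hcov, -⟩ := hP
  obtain ⟨k, hk⟩ := hcov e (mem_fSupp.mpr he)
  obtain rfl | hkj := eq_or_ne k j
  · exact hk
  · exact absurd ⟨e, hk, hue⟩ (hvdisj j k hkj.symm u (mem_vertSet.mp hu))

lemma IsFPM.supportClosed_vertSet (hf : IsFPM G f) (hP : IsPartitionWitness f δ P)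
    (j : Fin δ) : SupportClosed f (vertSet (P j)) :=
  fun _ he _ hu huj _ hv =>
    mem_vertSet_of_mem (hP.mem_of_mem_vertSet (hf.pos_of_ne_zero he) hu huj) hv

lemma IsFPM.card_vertSet_eq_three (hf : IsFPM G f) (hP : IsPartitionWitness f δ P)
    (hV : Fintype.card V = 3 * δ) (j : Fin δ) : (vertSet (P j)).card = 3 := by
  have hδ : (δ : ℝ) ≠ 0 := Nat.cast_ne_zero.mpr j.pos.ne'
  have hsum := sum_fracDeg_eq_two_mul_sum (U := vertSet (P j))
    (fun e he v hv => mem_vertSet_of_mem he hv)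
    (fun e he => hf.not_isDiag_of_ne_zero (mem_fSupp.mp (hP.2.2.1 j he)).ne')
    (fun e he v hv hu => hP.mem_of_mem_vertSet (hf.pos_of_ne_zero he) hv hu)
  obtain ⟨-, -, -, -, hweight⟩ := hP
  simp only [hf.2.2, sum_const, nsmul_one, hweight j, hV] at hsum
  have hcard : ((vertSet (P j)).card : ℝ) = 3 := by
    rw [hsum]
    push_cast
    field_simp
  exact_mod_cast hcard

theorem IsFPM.exists_triangle_partition (hf : IsFPM G f) (hV : Fintype.card V = 3 * δ)
    (hP : IsPartitionWitness f δ P) :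
    ∃ W : Fin δ → Finset V,
      (∀ j, (W j).card = 3) ∧
      (∀ j k, j ≠ k → Disjoint (W j) (W k)) ∧
      (∀ v : V, ∃ j, v ∈ W j) ∧
      (∀ j, ∀ u ∈ W j, ∀ v ∈ W j, u ≠ v → G.Adj u v) := by
  obtain ⟨-, hvdisj, -, hcov, -⟩ := id hP
  refine ⟨fun j => vertSet (P j), hf.card_vertSet_eq_three hP hV, ?_, ?_, ?_⟩
  · intro j k hjk
    rw [disjoint_left]
    intro v hj hk
    exact hvdisj j k hjk v (mem_vertSet.mp hj) (mem_vertSet.mp hk)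
  · intro v
    have hv : fracDeg f v ≠ 0 := by
      rw [hf.2.2 v]
      exact one_ne_zero
    obtain ⟨e, hve, he⟩ := exists_ne_zero_of_sum_ne_zero hv
    obtain ⟨j, hj⟩ := hcov e (mem_fSupp.mpr (hf.pos_of_ne_zero he))
    exact ⟨j, mem_vertSet_of_mem hj (mem_filter.mp hve).2⟩
  · intro j u hu v hv huv
    exact hf.adj_of_supportClosed (hf.supportClosed_vertSet hP j)
      (hf.card_vertSet_eq_three hP hV j) hu hv huv

end FractionalPerfectMatching

section InnerEdges

variable {α : Type*} [DecidableEq α]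

def innerEdges (s : Finset α) : Finset (Sym2 α) :=
  s.sym2.filter fun e => ¬ e.IsDiag

lemma mem_innerEdges {s : Finset α} {e : Sym2 α} :
    e ∈ innerEdges s ↔ (∀ v ∈ e, v ∈ s) ∧ ¬ e.IsDiag := by
  rw [innerEdges, mem_filter, mem_sym2_iff]

lemma mk_mem_innerEdges {s : Finset α} {u v : α} (hu : u ∈ s) (hv : v ∈ s) (huv : u ≠ v) :
    s(u, v) ∈ innerEdges s := by
  simp [innerEdges, hu, hv, huv]

variable {δ : ℕ} {W : Fin δ → Finset α}

noncomputable def halfOnInnerEdges (W : Fin δ → Finset α) (e : Sym2 α) : ℝ :=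
  if ∃ j, e ∈ innerEdges (W j) then 1 / 2 else 0

lemma halfOnInnerEdges_of_mem {j : Fin δ} {e : Sym2 α} (he : e ∈ innerEdges (W j)) :
    halfOnInnerEdges W e = 1 / 2 :=
  if_pos ⟨j, he⟩

lemma exists_mem_innerEdges_of_halfOnInnerEdges_ne_zero {e : Sym2 α}
    (he : halfOnInnerEdges W e ≠ 0) : ∃ j, e ∈ innerEdges (W j) := by
  by_contra h
  exact he (if_neg h)

lemma not_isDiag_of_halfOnInnerEdges_ne_zero {e : Sym2 α} (he : halfOnInnerEdges W e ≠ 0) :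
    ¬ e.IsDiag :=
  let ⟨_, hj⟩ := exists_mem_innerEdges_of_halfOnInnerEdges_ne_zero he
  (mem_innerEdges.mp hj).2

lemma mem_innerEdges_of_halfOnInnerEdges_ne_zero (hdisj : ∀ j k, j ≠ k → Disjoint (W j) (W k))
    {j : Fin δ} {e : Sym2 α} {u : α} (he : halfOnInnerEdges W e ≠ 0) (hue : u ∈ e)
    (hu : u ∈ W j) : e ∈ innerEdges (W j) := by
  obtain ⟨k, hk⟩ := exists_mem_innerEdges_of_halfOnInnerEdges_ne_zero he
  obtain rfl | hkj := eq_or_ne k j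
  · exact hk
  · exact absurd hu (disjoint_left.mp (hdisj k j hkj) ((mem_innerEdges.mp hk).1 u hue))

lemma supportClosed_halfOnInnerEdges (hdisj : ∀ j k, j ≠ k → Disjoint (W j) (W k))
    (j : Fin δ) : SupportClosed (halfOnInnerEdges W) (W j) :=
  fun _ he _ hue hu =>
    (mem_innerEdges.mp (mem_innerEdges_of_halfOnInnerEdges_ne_zero hdisj he hue hu)).1

end InnerEdges

section TrianglePartition

variable {G : SimpleGraph V} {δ : ℕ} {W : Fin δ → Finset V}

lemma fracDeg_halfOnInnerEdges (hcard : ∀ j, (W j).card = 3)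
    (hdisj : ∀ j k, j ≠ k → Disjoint (W j) (W k)) (hcov : ∀ v : V, ∃ j, v ∈ W j)
    (v : V) : fracDeg (halfOnInnerEdges W) v = 1 := by
  obtain ⟨j, hv⟩ := hcov v
  obtain ⟨y, hy, hyv⟩ := exists_mem_ne (by rw [hcard j]; norm_num) v
  obtain ⟨z, hzv, hzy, hW⟩ := exists_eq_triple_of_mem (hcard j) hv hy hyv.symm
  have hz : z ∈ W j := by simp [hW]
  rw [fracDeg_eq_add_of_supportClosed (fun _ => not_isDiag_of_halfOnInnerEdges_ne_zero)
      (hW ▸ supportClosed_halfOnInnerEdges hdisj j) hzy.symm,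
    halfOnInnerEdges_of_mem (mk_mem_innerEdges hv hy hyv.symm),
    halfOnInnerEdges_of_mem (mk_mem_innerEdges hv hz hzv.symm)]
  norm_num

lemma isFPM_halfOnInnerEdges (hcard : ∀ j, (W j).card = 3)
    (hdisj : ∀ j k, j ≠ k → Disjoint (W j) (W k)) (hcov : ∀ v : V, ∃ j, v ∈ W j)
    (hadj : ∀ j, ∀ u ∈ W j, ∀ v ∈ W j, u ≠ v → G.Adj u v) :
    IsFPM G (halfOnInnerEdges W) := by
  refine ⟨fun e => ?_, fun e he => ?_, fracDeg_halfOnInnerEdges hcard hdisj hcov⟩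
  · unfold halfOnInnerEdges
    split_ifs <;> norm_num
  · by_contra hne
    obtain ⟨j, hj⟩ := exists_mem_innerEdges_of_halfOnInnerEdges_ne_zero hne
    induction e using Sym2.ind with
    | h u v =>
      obtain ⟨huv, hdiag⟩ := mem_innerEdges.mp hj
      exact he (hadj j u (huv u (Sym2.mem_mk_left u v)) v (huv v (Sym2.mem_mk_right u v))
        (Sym2.mk_isDiag_iff.not.mp hdiag))

lemma isPartitionWitness_innerEdges (hV : Fintype.card V = 3 * δ)
    (hcard : ∀ j, (W j).card = 3) (hdisj : ∀ j k, j ≠ k → Disjoint (W j) (W k))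
    (hcov : ∀ v : V, ∃ j, v ∈ W j) :
    IsPartitionWitness (halfOnInnerEdges W) δ fun j => innerEdges (W j) := by
  refine ⟨fun j => ?_, fun j k hjk v ⟨e, he, hve⟩ ⟨e', he', hve'⟩ => ?_, fun j e he => ?_,
    fun e he => ?_, fun j => ?_⟩
  · obtain ⟨a, b, c, hab, -, -, hW⟩ := card_eq_three.mp (hcard j)
    exact ⟨s(a, b), mk_mem_innerEdges (by simp [hW]) (by simp [hW]) hab⟩
  · exact disjoint_left.mp (hdisj j k hjk) ((mem_innerEdges.mp he).1 v hve)
      ((mem_innerEdges.mp he').1 v hve')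
  · rw [mem_fSupp, halfOnInnerEdges_of_mem he]
    norm_num
  · exact exists_mem_innerEdges_of_halfOnInnerEdges_ne_zero (mem_fSupp.mp he).ne'
  · have hδ : (δ : ℝ) ≠ 0 := Nat.cast_ne_zero.mpr j.pos.ne'
    have hsum := sum_fracDeg_eq_two_mul_sum (U := W j) (fun e he => (mem_innerEdges.mp he).1)
      (fun e he => (mem_innerEdges.mp he).2)
      (fun e he u hue hu => mem_innerEdges_of_halfOnInnerEdges_ne_zero hdisj he hue hu)
    simp only [fracDeg_halfOnInnerEdges hcard hdisj hcov, sum_const, nsmul_one, hcard j,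
      Nat.cast_ofNat] at hsum
    rw [hV]
    push_cast
    field_simp
    linarith

end TrianglePartition

theorem third_partitionable_iff_partition_into_triangles_general (G : SimpleGraph V) (δ : ℕ)
    (hV : Fintype.card V = 3 * δ) :
    (∃ f : Sym2 V → ℝ, IsFPM G f ∧ IsDeltaPartitionable f δ) ↔
    ∃ W : Fin δ → Finset V,
      (∀ j, (W j).card = 3) ∧
      (∀ j k, j ≠ k → Disjoint (W j) (W k)) ∧
      (∀ v : V, ∃ j, v ∈ W j) ∧
      (∀ j, ∀ u ∈ W j, ∀ v ∈ W j, u ≠ v → G.Adj u v) := by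
  constructor
  · rintro ⟨f, hf, P, hP⟩
    exact hf.exists_triangle_partition hV hP
  · rintro ⟨W, hcard, hdisj, hcov, hadj⟩
    exact ⟨halfOnInnerEdges W, isFPM_halfOnInnerEdges hcard hdisj hcov hadj,
      fun j => innerEdges (W j), isPartitionWitness_innerEdges hV hcard hdisj hcov⟩

/-- for `|V| = 3δ`, `G` has a `(|V|/3)`-Partitionable fractional perfect
matching iff `V` can be partitioned into `δ` triples of vertices each inducing a
triangle in `G`. -/
theorem third_partitionable_iff_partition_into_triangles (G : SimpleGraph V)
    (hG : ∀ v : V, ∃ u, G.Adj u v) (δ : ℕ) (hδ : 1 ≤ δ)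
    (hV : Fintype.card V = 3 * δ) :
    (∃ f : Sym2 V → ℝ, IsFPM G f ∧ IsDeltaPartitionable f δ) ↔
    ∃ W : Fin δ → Finset V,
      (∀ j, (W j).card = 3) ∧
      (∀ j k, j ≠ k → Disjoint (W j) (W k)) ∧
      (∀ v : V, ∃ j, v ∈ W j) ∧
      (∀ j, ∀ u ∈ W j, ∀ v ∈ W j, u ≠ v → G.Adj u v) :=
  third_partitionable_iff_partition_into_triangles_general G δ hV
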